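/- Let v be a smooth velocity field with material acceleration dv/dt = T grad s − grad(h + Ω), where T, h, Ω, s are smooth scalar fields and ds/dt = 0. Let γ₀ be a smooth closed curve lying on a level surface of s₀ = s∘φ₀ (i.e. s is constant along γ₀), and γ_t = φ_t ∘ γ₀ its image under the flow. Then the circulation ∮_{γ_t} v·dℓ is constant in time (Kelvin's theorem for isentropic fluid curves). -/

import Mathlib

open Matrix intervalIntegral

/-- partial time derivative of a time-dependent vector field -/
noncomputable def dtv (f : ℝ × (Fin 3 → ℝ) → (Fin 3 → ℝ)) (p : ℝ × (Fin 3 → ℝ)) : Fin 3 → ℝ :=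
  deriv (fun s => f (s, p.2)) p.1

/-- spatial Jacobian applied to a vector -/
noncomputable def dxv (f : ℝ × (Fin 3 → ℝ) → (Fin 3 → ℝ)) (p : ℝ × (Fin 3 → ℝ))
    (u : Fin 3 → ℝ) : Fin 3 → ℝ :=
  fderiv ℝ (fun y => f (p.1, y)) p.2 u

/-- spatial gradient of a scalar field -/
noncomputable def grads (f : ℝ × (Fin 3 → ℝ) → ℝ) (p : ℝ × (Fin 3 → ℝ)) : Fin 3 → ℝ :=
  fun i => fderiv ℝ (fun y => f (p.1, y)) p.2 (Pi.single i 1)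

/-- material derivative of a scalar field: ∂/∂t + v·∇ -/
noncomputable def matDt (v : ℝ × (Fin 3 → ℝ) → (Fin 3 → ℝ))
    (f : ℝ × (Fin 3 → ℝ) → ℝ) (p : ℝ × (Fin 3 → ℝ)) : ℝ :=
  deriv (fun s => f (s, p.2)) p.1 + grads f p ⬝ᵥ v p

/-- circulation of `v` at time `t` around the image under the flow `φ` of the closed
curve `γ₀` (parametrized over `[0,1]`) -/
noncomputable def circulation (v : ℝ × (Fin 3 → ℝ) → (Fin 3 → ℝ))
    (φ : ℝ → (Fin 3 → ℝ) → (Fin 3 → ℝ)) (γ₀ : ℝ → (Fin 3 → ℝ)) (t : ℝ) : ℝ :=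
  ∫ u in (0:ℝ)..1, v (t, φ t (γ₀ u)) ⬝ᵥ deriv (fun w => φ t (γ₀ w)) u

section Helpers

variable {E F : Type*} [NormedAddCommGroup E] [NormedSpace ℝ E]
  [NormedAddCommGroup F] [NormedSpace ℝ F]

lemma partial1 {f : ℝ × E → F} {p : ℝ × E} (hf : DifferentiableAt ℝ f p) :
    HasDerivAt (fun s => f (s, p.2)) (fderiv ℝ f p (1, 0)) p.1 := by
  have h := hf.hasFDerivAt.comp_hasDerivAt p.1
    ((hasDerivAt_id p.1).prodMk (hasDerivAt_const p.1 p.2))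
  exact h

lemma partial2 {f : E × ℝ → F} {p : E × ℝ} (hf : DifferentiableAt ℝ f p) :
    HasDerivAt (fun w => f (p.1, w)) (fderiv ℝ f p (0, 1)) p.2 := by
  have h := hf.hasFDerivAt.comp_hasDerivAt p.2
    ((hasDerivAt_const p.2 p.1).prodMk (hasDerivAt_id p.2))
  exact h

lemma partialx {f : ℝ × E → F} {p : ℝ × E} (hf : DifferentiableAt ℝ f p) (u : E) :
    fderiv ℝ (fun y => f (p.1, y)) p.2 u = fderiv ℝ f p (0, u) := by
  have h : HasFDerivAt (fun y => f (p.1, y))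
      ((fderiv ℝ f p).comp ((0 : E →L[ℝ] ℝ).prod (ContinuousLinearMap.id ℝ E))) p.2 :=
    hf.hasFDerivAt.comp p.2 ((hasFDerivAt_const p.1 p.2).prodMk (hasFDerivAt_id p.2))
  rw [h.fderiv]; rfl

end Helpers

lemma grads_dot {f : ℝ × (Fin 3 → ℝ) → ℝ} {p : ℝ × (Fin 3 → ℝ)}
    (hf : DifferentiableAt ℝ f p) (w : Fin 3 → ℝ) :
    grads f p ⬝ᵥ w = fderiv ℝ f p (0, w) := by
  have hlin : ∀ u : Fin 3 → ℝ, fderiv ℝ f p ((0 : ℝ), u)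
      = ∑ i, u i * fderiv ℝ f p (0, Pi.single i 1) := by
    intro u
    have : ((0 : ℝ), u) = ∑ i : Fin 3, u i • (((0:ℝ), (Pi.single i 1 : Fin 3 → ℝ)) : ℝ × (Fin 3 → ℝ)) := by
      refine Prod.ext ?_ ?_
      · simp [Prod.fst_sum]
      · funext x
        simp [Prod.snd_sum, Finset.sum_apply, Pi.single_apply, mul_ite]
    rw [this, map_sum]
    refine Finset.sum_congr rfl fun i _ => ?_
    rw [_root_.map_smul, smul_eq_mul]
  rw [hlin w]
  simp only [grads, dotProduct]
  congr 1; ext i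
  rw [partialx hf, mul_comm]
section Curve

variable (v : ℝ × (Fin 3 → ℝ) → (Fin 3 → ℝ)) (h Ω : ℝ × (Fin 3 → ℝ) → ℝ)
  (φ : ℝ → (Fin 3 → ℝ) → (Fin 3 → ℝ)) (γ₀ : ℝ → (Fin 3 → ℝ))

/-- position of the curve point with parameter `p.2` at time `p.1` -/
noncomputable def Xc (p : ℝ × ℝ) : Fin 3 → ℝ := φ p.1 (γ₀ p.2)

/-- space-time position -/
noncomputable def Yc (p : ℝ × ℝ) : ℝ × (Fin 3 → ℝ) := (p.1, Xc φ γ₀ p)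

/-- velocity along the curve -/
noncomputable def Vc (p : ℝ × ℝ) : Fin 3 → ℝ := v (Yc φ γ₀ p)

/-- tangent vector of the curve -/
noncomputable def Wc (p : ℝ × ℝ) : Fin 3 → ℝ := fderiv ℝ (Xc φ γ₀) p (0, 1)

/-- circulation integrand -/
noncomputable def Fc (p : ℝ × ℝ) : ℝ := Vc v φ γ₀ p ⬝ᵥ Wc φ γ₀ p

/-- potential for the `u`-derivative -/
noncomputable def Gc (p : ℝ × ℝ) : ℝ :=
  Vc v φ γ₀ p ⬝ᵥ Vc v φ γ₀ p / 2 - (h (Yc φ γ₀ p) + Ω (Yc φ γ₀ p))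

/-- time derivative of the circulation integrand -/
noncomputable def DFc (p : ℝ × ℝ) : ℝ :=
  Vc v φ γ₀ p ⬝ᵥ fderiv ℝ (Vc v φ γ₀) p (0, 1)
    - fderiv ℝ (fun q => h q + Ω q) (Yc φ γ₀ p) (0, Wc φ γ₀ p)

end Curve

lemma HasDerivAt.dotProd {x : ℝ} {f g : ℝ → Fin 3 → ℝ} {f' g' : Fin 3 → ℝ}
    (hf : HasDerivAt f f' x) (hg : HasDerivAt g g' x) :
    HasDerivAt (fun t => f t ⬝ᵥ g t) (f' ⬝ᵥ g x + f x ⬝ᵥ g') x := by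
  have h := HasDerivAt.fun_sum (u := Finset.univ)
    (fun i _ => ((hasDerivAt_pi.1 hf i).mul (hasDerivAt_pi.1 hg i)))
  simpa [dotProduct, Finset.sum_add_distrib] using h
/-- Kelvin's theorem for isentropic fluid curves: if the material
acceleration is `T grad s − grad(h+Ω)` with `ds/dt = 0`, and the closed curve `γ₀` lies
on a level surface of `s` at time `0`, then the circulation around its image under the
flow is constant in time. -/
theorem stmt14
    (v : ℝ × (Fin 3 → ℝ) → (Fin 3 → ℝ)) (hv : ContDiff ℝ (⊤ : ℕ∞) v)
    (T h Ω s : ℝ × (Fin 3 → ℝ) → ℝ)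
    (hT : ContDiff ℝ (⊤ : ℕ∞) T) (hh : ContDiff ℝ (⊤ : ℕ∞) h) (hΩ : ContDiff ℝ (⊤ : ℕ∞) Ω)
    (hs : ContDiff ℝ (⊤ : ℕ∞) s)
    (haccel : ∀ p, dtv v p + dxv v p (v p)
      = T p • grads s p - grads (fun q => h q + Ω q) p)
    (hsinv : ∀ p, matDt v s p = 0)
    (φ : ℝ → (Fin 3 → ℝ) → (Fin 3 → ℝ))
    (hφ : ContDiff ℝ (⊤ : ℕ∞) (fun p : ℝ × (Fin 3 → ℝ) => φ p.1 p.2))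
    (hφ0 : ∀ x, φ 0 x = x)
    (hflow : ∀ t x, deriv (fun τ => φ τ x) t = v (t, φ t x))
    (γ₀ : ℝ → (Fin 3 → ℝ)) (hγ : ContDiff ℝ (⊤ : ℕ∞) γ₀)
    (hclosed : ∀ u, γ₀ (u + 1) = γ₀ u)
    (hlevel : ∀ u, s (0, φ 0 (γ₀ u)) = s (0, φ 0 (γ₀ 0))) :
    ∀ t, circulation v φ γ₀ t = circulation v φ γ₀ 0 := by
  -- basic smoothness
  have hX : ContDiff ℝ (⊤ : ℕ∞) (Xc φ γ₀) := hφ.comp (contDiff_fst.prodMk (hγ.comp contDiff_snd))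
  have hXd : Differentiable ℝ (Xc φ γ₀) := hX.differentiable (by simp)
  have hY : ContDiff ℝ (⊤ : ℕ∞) (Yc φ γ₀) := contDiff_fst.prodMk hX
  have hV : ContDiff ℝ (⊤ : ℕ∞) (Vc v φ γ₀) := hv.comp hY
  have hVd : Differentiable ℝ (Vc v φ γ₀) := hV.differentiable (by simp)
  have hf' : ContDiff ℝ (⊤ : ℕ∞) (fun p => fderiv ℝ (Xc φ γ₀) p) := hX.fderiv_right (by simp)
  have hW : ContDiff ℝ (⊤ : ℕ∞) (Wc φ γ₀) := hf'.clm_apply contDiff_const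
  have hB : ContDiff ℝ (⊤ : ℕ∞) (fun p => fderiv ℝ (Vc v φ γ₀) p (0, 1)) :=
    (hV.fderiv_right (by simp)).clm_apply contDiff_const
  -- time derivative of position is the velocity
  have hD1 : ∀ p : ℝ × ℝ, fderiv ℝ (Xc φ γ₀) p (1, 0) = Vc v φ γ₀ p := by
    intro p
    have h1 : HasDerivAt (fun τ => φ τ (γ₀ p.2)) (fderiv ℝ (Xc φ γ₀) p (1, 0)) p.1 :=
      partial1 (hXd p)
    rw [← h1.deriv]
    exact hflow p.1 (γ₀ p.2)
  have hXt : ∀ p : ℝ × ℝ, HasDerivAt (fun τ => Xc φ γ₀ (τ, p.2)) (Vc v φ γ₀ p) p.1 :=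
    fun p => hD1 p ▸ partial1 (hXd p)
  -- time derivative of velocity along the flow
  have hVt : ∀ p : ℝ × ℝ, HasDerivAt (fun τ => Vc v φ γ₀ (τ, p.2))
      (fderiv ℝ v (Yc φ γ₀ p) (1, Vc v φ γ₀ p)) p.1 := by
    intro p
    have hin : HasDerivAt (fun τ => ((τ, Xc φ γ₀ (τ, p.2)) : ℝ × (Fin 3 → ℝ)))
        (1, Vc v φ γ₀ p) p.1 := (hasDerivAt_id p.1).prodMk (hXt p)
    exact (hv.differentiable (by simp) (Yc φ γ₀ p)).hasFDerivAt.comp_hasDerivAt p.1 hin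
  have hdtv : ∀ q, dtv v q = fderiv ℝ v q (1, 0) :=
    fun q => (partial1 (hv.differentiable (by simp) q)).deriv
  have hdecomp : ∀ p : ℝ × ℝ, fderiv ℝ v (Yc φ γ₀ p) (1, Vc v φ γ₀ p)
      = dtv v (Yc φ γ₀ p) + dxv v (Yc φ γ₀ p) (Vc v φ γ₀ p) := by
    intro p
    have h2 : dxv v (Yc φ γ₀ p) (Vc v φ γ₀ p)
        = fderiv ℝ v (Yc φ γ₀ p) (0, Vc v φ γ₀ p) :=
      partialx (hv.differentiable (by simp) _) _
    rw [hdtv, h2, ← map_add]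
    congr 1
    simp [Prod.ext_iff]
  -- symmetry of second derivatives: time derivative of the tangent vector
  have hWt : ∀ p : ℝ × ℝ, HasDerivAt (fun τ => Wc φ γ₀ (τ, p.2))
      (fderiv ℝ (Vc v φ γ₀) p (0, 1)) p.1 := by
    intro p
    have hs1 : HasDerivAt (fun τ => fderiv ℝ (Xc φ γ₀) (τ, p.2))
        (fderiv ℝ (fun q => fderiv ℝ (Xc φ γ₀) q) p (1, 0)) p.1 :=
      partial1 ((hf'.differentiable (by simp)) p)
    have hs2 := hs1.clm_apply (hasDerivAt_const p.1 (((0 : ℝ), (1 : ℝ)) : ℝ × ℝ))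
    simp only [map_zero, add_zero] at hs2
    have hsym : fderiv ℝ (fun q => fderiv ℝ (Xc φ γ₀) q) p (1, 0) (0, 1)
        = fderiv ℝ (fun q => fderiv ℝ (Xc φ γ₀) q) p (0, 1) (1, 0) :=
      second_derivative_symmetric (fun y => (hXd y).hasFDerivAt)
        ((hf'.differentiable (by simp) p).hasFDerivAt) _ _
    have h4 := (hf'.differentiable (by simp) p).hasFDerivAt.clm_apply
      (hasFDerivAt_const (((1 : ℝ), (0 : ℝ)) : ℝ × ℝ) p)
    have hfun : (fun q => fderiv ℝ (Xc φ γ₀) q ((1 : ℝ), (0 : ℝ))) = Vc v φ γ₀ :=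
      funext hD1
    have h5 : fderiv ℝ (Vc v φ γ₀) p (0, 1)
        = fderiv ℝ (fun q => fderiv ℝ (Xc φ γ₀) q) p (0, 1) (1, 0) := by
      rw [← hfun, h4.fderiv]
      simp
    rw [h5, ← hsym] at *
    exact hs2
  -- entropy is constant along the flow and along the curve
  have hSt : ∀ q : ℝ × ℝ, HasDerivAt (fun τ => s (Yc φ γ₀ (τ, q.2))) 0 q.1 := by
    intro q
    have hin : HasDerivAt (fun τ => Yc φ γ₀ (τ, q.2)) (1, Vc v φ γ₀ q) q.1 :=
      (hasDerivAt_id q.1).prodMk (hXt q)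
    have h1 := (hs.differentiable (by simp) (Yc φ γ₀ q)).hasFDerivAt.comp_hasDerivAt q.1 hin
    have h2 : fderiv ℝ s (Yc φ γ₀ q) (1, Vc v φ γ₀ q) = matDt v s (Yc φ γ₀ q) := by
      have ha : deriv (fun σ => s (σ, (Yc φ γ₀ q).2)) (Yc φ γ₀ q).1
          = fderiv ℝ s (Yc φ γ₀ q) (1, 0) :=
        (partial1 (hs.differentiable (by simp) _)).deriv
      have hb : grads s (Yc φ γ₀ q) ⬝ᵥ v (Yc φ γ₀ q)
          = fderiv ℝ s (Yc φ γ₀ q) (0, v (Yc φ γ₀ q)) :=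
        grads_dot (hs.differentiable (by simp) _) _
      show _ = deriv (fun σ => s (σ, (Yc φ γ₀ q).2)) (Yc φ γ₀ q).1
        + grads s (Yc φ γ₀ q) ⬝ᵥ v (Yc φ γ₀ q)
      rw [ha, hb, ← map_add]
      congr 1
      simp [Prod.ext_iff, Vc]
    rw [h2, hsinv (Yc φ γ₀ q)] at h1
    exact h1
  have Sconst : ∀ q : ℝ × ℝ, s (Yc φ γ₀ q) = s (0, γ₀ 0) := by
    intro q
    have hconst : s (Yc φ γ₀ (q.1, q.2)) = s (Yc φ γ₀ (0, q.2)) :=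
      is_const_of_deriv_eq_zero (f := fun τ => s (Yc φ γ₀ (τ, q.2)))
        (fun τ => (hSt (τ, q.2)).differentiableAt) (fun τ => (hSt (τ, q.2)).deriv) q.1 0
    have h0 : Yc φ γ₀ (0, q.2) = (0, γ₀ q.2) := by simp [Yc, Xc, hφ0]
    have hl := hlevel q.2
    rw [hφ0, hφ0] at hl
    calc s (Yc φ γ₀ q) = s (Yc φ γ₀ (0, q.2)) := hconst
      _ = s (0, γ₀ q.2) := by rw [h0]
      _ = s (0, γ₀ 0) := hl
  have hSu0 : ∀ p : ℝ × ℝ, fderiv ℝ s (Yc φ γ₀ p) (0, Wc φ γ₀ p) = 0 := by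
    intro p
    have hin : HasDerivAt (fun w => Yc φ γ₀ (p.1, w)) ((0 : ℝ), Wc φ γ₀ p) p.2 :=
      (hasDerivAt_const p.2 p.1).prodMk (partial2 (hXd p))
    have h1 : HasDerivAt (fun w => s (Yc φ γ₀ (p.1, w)))
        (fderiv ℝ s (Yc φ γ₀ p) (0, Wc φ γ₀ p)) p.2 :=
      (hs.differentiable (by simp) (Yc φ γ₀ p)).hasFDerivAt.comp_hasDerivAt p.2 hin
    have hc : (fun w => s (Yc φ γ₀ (p.1, w))) = fun _ => s (0, γ₀ 0) :=
      funext fun w => Sconst (p.1, w)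
    rw [hc] at h1
    exact h1.unique (hasDerivAt_const _ _)
  -- the key pointwise identity
  have hkey : ∀ p : ℝ × ℝ, fderiv ℝ v (Yc φ γ₀ p) (1, Vc v φ γ₀ p) ⬝ᵥ Wc φ γ₀ p
      + Vc v φ γ₀ p ⬝ᵥ fderiv ℝ (Vc v φ γ₀) p (0, 1) = DFc v h Ω φ γ₀ p := by
    intro p
    rw [hdecomp p, show Vc v φ γ₀ p = v (Yc φ γ₀ p) from rfl, haccel,
      sub_dotProduct, smul_dotProduct,
      grads_dot (hs.differentiable (by simp) _) _,
      grads_dot ((hh.add hΩ).differentiable (by simp) _) _, hSu0 p]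
    show T (Yc φ γ₀ p) • (0:ℝ) - _ + _ = DFc v h Ω φ γ₀ p
    simp only [smul_eq_mul, mul_zero, zero_sub, DFc, Vc]
    ring
  have hFt : ∀ p : ℝ × ℝ, HasDerivAt (fun τ => Fc v φ γ₀ (τ, p.2))
      (DFc v h Ω φ γ₀ p) p.1 := by
    intro p
    rw [← hkey p]
    exact (hVt p).dotProd (hWt p)
  -- the u-derivative of the potential Gc
  have hGu : ∀ p : ℝ × ℝ, HasDerivAt (fun w => Gc v h Ω φ γ₀ (p.1, w))
      (DFc v h Ω φ γ₀ p) p.2 := by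
    intro p
    have hVu : HasDerivAt (fun w => Vc v φ γ₀ (p.1, w))
        (fderiv ℝ (Vc v φ γ₀) p (0, 1)) p.2 := partial2 (hVd p)
    have h1 := (hVu.dotProd hVu).div_const 2
    have hin : HasDerivAt (fun w => Yc φ γ₀ (p.1, w)) ((0 : ℝ), Wc φ γ₀ p) p.2 :=
      (hasDerivAt_const p.2 p.1).prodMk (partial2 (hXd p))
    have h2 := ((hh.add hΩ).differentiable (by simp) (Yc φ γ₀ p)).hasFDerivAt.comp_hasDerivAt
      p.2 hin
    have h3 := h1.sub h2
    have hval : DFc v h Ω φ γ₀ p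
        = (fderiv ℝ (Vc v φ γ₀) p (0, 1) ⬝ᵥ Vc v φ γ₀ p
          + Vc v φ γ₀ p ⬝ᵥ fderiv ℝ (Vc v φ γ₀) p (0, 1)) / 2
          - fderiv ℝ (fun q => h q + Ω q) (Yc φ γ₀ p) (0, Wc φ γ₀ p) := by
      rw [dotProduct_comm]
      show DFc v h Ω φ γ₀ p = _
      unfold DFc
      ring
    rw [hval]
    exact h3
  -- continuity facts
  have hcont_dot : ∀ {X : Type} [TopologicalSpace X] (f g : X → Fin 3 → ℝ),
      Continuous f → Continuous g → Continuous fun x => f x ⬝ᵥ g x := by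
    intro X _ f g hf hg
    simp only [dotProduct]
    exact continuous_finset_sum _ fun i _ =>
      ((continuous_apply i).comp hf).mul ((continuous_apply i).comp hg)
  have hFcont : Continuous (Fc v φ γ₀) :=
    hcont_dot _ _ hV.continuous hW.continuous
  have hDFcont : Continuous (DFc v h Ω φ γ₀) := by
    refine Continuous.sub (hcont_dot _ _ hV.continuous hB.continuous) ?_
    exact ((((hh.add hΩ).fderiv_right (m := (⊤ : ℕ∞)) (by simp))).continuous.comp hY.continuous).clm_apply
      (continuous_const.prodMk hW.continuous)
  -- derivative of the circulation integral
  have hCd : ∀ t₀ : ℝ, HasDerivAt (fun τ => ∫ u in (0:ℝ)..1, Fc v φ γ₀ (τ, u))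
      (∫ u in (0:ℝ)..1, DFc v h Ω φ γ₀ (t₀, u)) t₀ := by
    intro t₀
    obtain ⟨M, hM⟩ := ((isCompact_closedBall t₀ 1).prod
      (isCompact_uIcc (a := (0:ℝ)) (b := 1))).exists_bound_of_continuousOn
      hDFcont.continuousOn
    refine (intervalIntegral.hasDerivAt_integral_of_dominated_loc_of_deriv_le
      (F := fun x u => Fc v φ γ₀ (x, u)) (F' := fun x u => DFc v h Ω φ γ₀ (x, u))
      (bound := fun _ => M) (Metric.ball_mem_nhds t₀ one_pos)
      (Filter.Eventually.of_forall fun x => ?_) ?_ ?_ ?_ ?_ ?_).2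
    · exact (hFcont.comp (continuous_const.prodMk continuous_id)).aestronglyMeasurable
    · exact (hFcont.comp (continuous_const.prodMk continuous_id)).intervalIntegrable 0 1
    · exact (hDFcont.comp (continuous_const.prodMk continuous_id)).aestronglyMeasurable
    · refine Filter.Eventually.of_forall fun u hu x hx => ?_
      exact hM (x, u) ⟨Metric.ball_subset_closedBall hx, Set.Ioc_subset_Icc_self hu⟩
    · exact intervalIntegrable_const
    · exact Filter.Eventually.of_forall fun u _ x _ => hFt (x, u)
  -- the derivative vanishes
  have hzero : ∀ t₀ : ℝ, (∫ u in (0:ℝ)..1, DFc v h Ω φ γ₀ (t₀, u)) = 0 := by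
    intro t₀
    have h1 : ∀ u : ℝ, deriv (fun w => Gc v h Ω φ γ₀ (t₀, w)) u
        = DFc v h Ω φ γ₀ (t₀, u) := fun u => (hGu (t₀, u)).deriv
    have h2 : ∫ u in (0:ℝ)..1, DFc v h Ω φ γ₀ (t₀, u)
        = ∫ u in (0:ℝ)..1, deriv (fun w => Gc v h Ω φ γ₀ (t₀, w)) u :=
      intervalIntegral.integral_congr fun u _ => (h1 u).symm
    have hint : IntervalIntegrable (deriv (fun w => Gc v h Ω φ γ₀ (t₀, w)))
        MeasureTheory.volume 0 1 := by
      rw [show (deriv (fun w => Gc v h Ω φ γ₀ (t₀, w)))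
        = fun u => DFc v h Ω φ γ₀ (t₀, u) from funext h1]
      exact (hDFcont.comp (continuous_const.prodMk continuous_id)).intervalIntegrable 0 1
    rw [h2, intervalIntegral.integral_deriv_eq_sub
      (fun u _ => (hGu (t₀, u)).differentiableAt) hint]
    have hγ1 : γ₀ 1 = γ₀ 0 := by simpa using hclosed 0
    have hX1 : Xc φ γ₀ ((t₀ : ℝ), (1 : ℝ)) = Xc φ γ₀ ((t₀ : ℝ), (0 : ℝ)) := by
      simp [Xc, hγ1]
    simp [Gc, Vc, Yc, hX1]
  -- identify the circulation with the integral of Fc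
  have hC : ∀ τ : ℝ, circulation v φ γ₀ τ = ∫ u in (0:ℝ)..1, Fc v φ γ₀ (τ, u) := by
    intro τ
    refine intervalIntegral.integral_congr fun u _ => ?_
    have hw : HasDerivAt (fun w => φ τ (γ₀ w)) (Wc φ γ₀ (τ, u)) u := partial2 (hXd (τ, u))
    rw [hw.deriv]
    rfl
  -- conclude
  intro t
  rw [hC t, hC 0]
  have hdiff : Differentiable ℝ (fun τ => ∫ u in (0:ℝ)..1, Fc v φ γ₀ (τ, u)) :=
    fun τ => (hCd τ).differentiableAt
  have hder : ∀ τ, deriv (fun τ' => ∫ u in (0:ℝ)..1, Fc v φ γ₀ (τ', u)) τ = 0 :=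
    fun τ => by rw [(hCd τ).deriv, hzero τ]
  exact is_const_of_deriv_eq_zero hdiff hder t 0
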